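/- The polynomial h_1 = Σ_{i=1}^m (x_{2m-i+1}^q x_i - x_{2m-i+1} x_i^q) ∈ F_q[x_1,...,x_{2m}] is invariant under the symplectic group Sp(2m,q), defined as the group of matrices preserving a fixed non-degenerate alternating bilinear form whose Gram matrix is the antidiagonal matrix with entries +1 in the top half of the antidiagonal and -1 in the bottom half. -/
import Mathlib


open MvPolynomial Finset

/-- The Gram matrix of the standard alternating form: antidiagonal with `+1` in the top half
and `-1` in the bottom half. -/
def sympGram (F : Type*) [Field F] (m : ℕ) : Matrix (Fin (2 * m)) (Fin (2 * m)) F :=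
  Matrix.of fun i j =>
    if (i : ℕ) + (j : ℕ) = 2 * m - 1 then (if (i : ℕ) < m then (1 : F) else -1) else 0

/-- `h_1 = Σ_{i=1}^m (x_{2m-i+1}^q x_i - x_{2m-i+1} x_i^q)`. -/
noncomputable def sympH (F : Type*) [Field F] (q m : ℕ) :
    MvPolynomial (Fin (2 * m)) F :=
  ∑ i : Fin m,
    (MvPolynomial.X (⟨2 * m - 1 - i, by have := i.isLt; omega⟩ : Fin (2 * m)) ^ q *
        MvPolynomial.X (⟨i, by have := i.isLt; omega⟩ : Fin (2 * m)) -
      MvPolynomial.X (⟨2 * m - 1 - i, by have := i.isLt; omega⟩ : Fin (2 * m)) *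
        MvPolynomial.X (⟨i, by have := i.isLt; omega⟩ : Fin (2 * m)) ^ q)

/-- Auxiliary: the polynomial `∑ i j, G i j • (X j ^ q * X i)` attached to a matrix `G`. -/
noncomputable def sympS (F : Type*) [Field F] (q m : ℕ)
    (G : Matrix (Fin (2 * m)) (Fin (2 * m)) F) : MvPolynomial (Fin (2 * m)) F :=
  ∑ i : Fin (2 * m), ∑ j : Fin (2 * m),
    G i j • (MvPolynomial.X j ^ q * MvPolynomial.X i)

lemma frob_sum (F : Type*) [Field F] [Fintype F] (m : ℕ)
    (c : Fin (2 * m) → F) :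
    (∑ l, c l • (X l : MvPolynomial (Fin (2 * m)) F)) ^ (Fintype.card F)
      = ∑ l, c l • (X l : MvPolynomial (Fin (2 * m)) F) ^ (Fintype.card F) := by
  have hp : (ringChar F).Prime := CharP.char_is_prime F _
  haveI : Fact (ringChar F).Prime := ⟨hp⟩
  obtain ⟨n, -, hcard⟩ := FiniteField.card F (ringChar F)
  haveI : ExpChar (MvPolynomial (Fin (2 * m)) F) (ringChar F) := .prime hp
  rw [hcard, sum_pow_char_pow]
  refine Finset.sum_congr rfl fun l _ => ?_
  rw [smul_pow, ← hcard, FiniteField.pow_card]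

lemma aeval_sympS (F : Type*) [Field F] [Fintype F] (m : ℕ)
    (M G : Matrix (Fin (2 * m)) (Fin (2 * m)) F) :
    MvPolynomial.aeval (R := F) (fun k => ∑ j, M k j • MvPolynomial.X j)
        (sympS F (Fintype.card F) m G)
      = sympS F (Fintype.card F) m (M.transpose * G * M) := by
  set q := Fintype.card F with hq
  unfold sympS
  rw [map_sum]
  have step : ∀ i j : Fin (2 * m),
      MvPolynomial.aeval (R := F) (fun k => ∑ j, M k j • MvPolynomial.X j)
        (G i j • (MvPolynomial.X j ^ q * MvPolynomial.X i))
      = ∑ l, ∑ k, (G i j * (M j l * M i k)) •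
          ((MvPolynomial.X l : MvPolynomial (Fin (2 * m)) F) ^ q * MvPolynomial.X k) := by
    intro i j
    rw [map_smul, map_mul, map_pow, aeval_X, aeval_X, hq, frob_sum, ← hq, Finset.sum_mul_sum]
    rw [Finset.smul_sum]
    refine Finset.sum_congr rfl fun l _ => ?_
    rw [Finset.smul_sum]
    refine Finset.sum_congr rfl fun k _ => ?_
    rw [smul_mul_smul_comm, smul_smul]
  have key : ∀ (f : Fin (2*m) → Fin (2*m) → Fin (2*m) → Fin (2*m) → MvPolynomial (Fin (2*m)) F),
      (∑ i, ∑ j, ∑ l, ∑ k, f i j l k) = ∑ k, ∑ l, ∑ i, ∑ j, f i j l k := by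
    intro f
    calc (∑ i, ∑ j, ∑ l, ∑ k, f i j l k)
        = ∑ i, ∑ l, ∑ j, ∑ k, f i j l k :=
          Finset.sum_congr rfl fun i _ => Finset.sum_comm
      _ = ∑ l, ∑ i, ∑ j, ∑ k, f i j l k := Finset.sum_comm
      _ = ∑ l, ∑ i, ∑ k, ∑ j, f i j l k :=
          Finset.sum_congr rfl fun l _ => Finset.sum_congr rfl fun i _ => Finset.sum_comm
      _ = ∑ l, ∑ k, ∑ i, ∑ j, f i j l k :=
          Finset.sum_congr rfl fun l _ => Finset.sum_comm
      _ = ∑ k, ∑ l, ∑ i, ∑ j, f i j l k := Finset.sum_comm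
  calc
    ∑ i, MvPolynomial.aeval (R := F) (fun k => ∑ j, M k j • MvPolynomial.X j)
        (∑ j, G i j • (MvPolynomial.X j ^ q * MvPolynomial.X i))
      = ∑ i, ∑ j, ∑ l, ∑ k, (G i j * (M j l * M i k)) •
          ((MvPolynomial.X l : MvPolynomial (Fin (2 * m)) F) ^ q * MvPolynomial.X k) := by
        refine Finset.sum_congr rfl fun i _ => ?_
        rw [map_sum]
        exact Finset.sum_congr rfl fun j _ => step i j
    _ = ∑ k, ∑ l, ∑ i, ∑ j, (G i j * (M j l * M i k)) •
          ((MvPolynomial.X l : MvPolynomial (Fin (2 * m)) F) ^ q * MvPolynomial.X k) :=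
        key _
    _ = ∑ k, ∑ l, (M.transpose * G * M) k l •
          ((MvPolynomial.X l : MvPolynomial (Fin (2 * m)) F) ^ q * MvPolynomial.X k) := by
        refine Finset.sum_congr rfl fun k _ => Finset.sum_congr rfl fun l _ => ?_
        simp only [← Finset.sum_smul]
        congr 1
        simp only [Matrix.mul_apply, Matrix.transpose_apply, Finset.sum_mul]
        rw [Finset.sum_comm]
        exact Finset.sum_congr rfl fun i _ => Finset.sum_congr rfl fun j _ => by ring

/-- Auxiliary function on ℕ giving the summands of `sympS _ _ _ (sympGram _ _)`. -/
noncomputable def sympF (F : Type*) [Field F] (q m : ℕ) (n : ℕ) :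
    MvPolynomial (Fin (2 * m)) F :=
  if h : n < 2 * m then
    (if n < m then (1 : F) else -1) •
      (MvPolynomial.X (⟨2 * m - 1 - n, by omega⟩ : Fin (2 * m)) ^ q *
        MvPolynomial.X (⟨n, h⟩ : Fin (2 * m)))
  else 0

lemma sympH_eq_sympS (F : Type*) [Field F] (q m : ℕ) :
    sympH F q m = sympS F q m (sympGram F m) := by
  have hinner : ∀ i : Fin (2 * m),
      (∑ j : Fin (2 * m), sympGram F m i j • (MvPolynomial.X j ^ q * MvPolynomial.X i))
        = sympF F q m i := by
    intro i
    have hi := i.isLt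
    rw [Finset.sum_eq_single (⟨2 * m - 1 - i, by omega⟩ : Fin (2 * m))]
    · simp only [sympGram, Matrix.of_apply, sympF, dif_pos hi]
      rw [if_pos (by omega)]
    · intro j _ hj
      have : (i : ℕ) + (j : ℕ) ≠ 2 * m - 1 := by
        intro h
        apply hj
        apply Fin.ext
        simp only
        omega
      simp [sympGram, this]
    · intro h; exact absurd (Finset.mem_univ _) h
  have hrange : sympS F q m (sympGram F m) = ∑ n ∈ Finset.range (2 * m), sympF F q m n := by
    rw [sympS, Finset.sum_congr rfl fun i _ => hinner i]
    exact Fin.sum_univ_eq_sum_range _ _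
  have hsplit : ∑ n ∈ Finset.range (2 * m), sympF F q m n
      = (∑ n ∈ Finset.range m, sympF F q m n)
        + ∑ n ∈ Finset.range m, sympF F q m (2 * m - 1 - n) := by
    rw [Finset.range_eq_Ico, ← Finset.sum_Ico_consecutive _ (Nat.zero_le m) (by omega : m ≤ 2 * m),
      ← Finset.range_eq_Ico]
    congr 1
    rw [Finset.sum_Ico_eq_sum_range]
    have := Finset.sum_range_reflect (fun k => sympF F q m (m + k)) m
    rw [show 2 * m - m = m by omega, ← this]
    exact Finset.sum_congr rfl fun k hk => by
      have := Finset.mem_range.mp hk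
      congr 1
      omega
  rw [hrange, hsplit, ← Finset.sum_add_distrib, sympH, Fin.sum_univ_eq_sum_range
    (fun n => sympF F q m n + sympF F q m (2 * m - 1 - n)) m |>.symm]
  refine Finset.sum_congr rfl fun k _ => ?_
  have hk := k.isLt
  have h1 : (k : ℕ) < 2 * m := by omega
  have h2 : 2 * m - 1 - (k : ℕ) < 2 * m := by omega
  rw [sympF, sympF, dif_pos h1, dif_pos h2, if_pos hk, if_neg (by omega : ¬ 2 * m - 1 - (k:ℕ) < m)]
  have h3 : 2 * m - 1 - (2 * m - 1 - (k : ℕ)) = (k : ℕ) := by omega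
  rw [one_smul, neg_smul, one_smul]
  simp only [h3]
  ring

theorem stmt_18 (F : Type*) [Field F] [Fintype F] (m : ℕ)
    (M : Matrix (Fin (2 * m)) (Fin (2 * m)) F)
    (hM : M.transpose * sympGram F m * M = sympGram F m) :
    MvPolynomial.aeval (R := F) (fun k => ∑ j, M k j • MvPolynomial.X j)
        (sympH F (Fintype.card F) m)
      = sympH F (Fintype.card F) m := by
  rw [sympH_eq_sympS, aeval_sympS, hM]
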